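/- There exists c_* > 0 with the following property: there exist pairwise disjoint finite sets Λ₀, Λ₁ ⊂ S² ∩ ℚ³ and, for each α ∈ {0,1} and each ξ ∈ Λ_α, a smooth positive function γ_ξ^{(α)} : B̄_{c_*}(Id) → (0,∞), such that (i) ξ ∈ Λ_α implies −ξ ∈ Λ_α and γ_{−ξ}^{(α)} = γ_ξ^{(α)}, and (ii) for each α ∈ {0,1} and every R ∈ B̄_{c_*}(Id) one has the decomposition R = (1/2) Σ_{ξ∈Λ_α} (γ_ξ^{(α)}(R))² (Id − ξ ⊗ ξ). -/

import Mathlib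

open MeasureTheory Real Filter

noncomputable section

/-- Points of ℝ³ (and values of vector fields). The torus 𝕋³ = ℝ³/(2πℤ)³ is represented by
(2πℤ)³-periodic functions on ℝ³, integrated over the fundamental cube `T3 = [-π,π]³`. -/
abbrev V3 := Fin 3 → ℝ

/-- 3×3 real matrices (as nested functions). -/
abbrev M3 := Fin 3 → Fin 3 → ℝ

/-- The fundamental cube [-π,π]³ of the torus 𝕋³. -/
def T3 : Set V3 := Set.Icc (fun _ => -π) (fun _ => π)

/-- Lebesgue measure restricted to the fundamental cube. -/
def μ3 : Measure V3 := volume.restrict T3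

/-- Euclidean dot product on ℝ³. -/
def dot3 (a b : V3) : ℝ := ∑ i, a i * b i

/-- Euclidean norm on ℝ³. -/
def enorm3 (a : V3) : ℝ := Real.sqrt (∑ i, (a i) ^ 2)

/-- Frobenius norm of a 3×3 matrix. -/
def frobM (R : M3) : ℝ := Real.sqrt (∑ i, ∑ j, (R i j) ^ 2)

/-- The 3×3 identity matrix. -/
def Id3 : M3 := fun i j => if i = j then 1 else 0

/-- (Euclidean) operator norm of a 3×3 matrix. -/
def opNorm3 (R : M3) : ℝ :=
  ⨆ x : {y : V3 // enorm3 y = 1}, enorm3 (fun i => ∑ j, R i j * x.1 j)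

/-- `f` is (2πℤ)³-periodic, i.e. a function on the torus 𝕋³. -/
def Periodic3 {α : Type*} (f : V3 → α) : Prop :=
  ∀ (x : V3) (k : Fin 3 → ℤ), f (fun i => x i + 2 * π * (k i : ℝ)) = f x

/-- `f` is (L·ℤ)³-periodic. -/
def PeriodicP3 {α : Type*} (L : ℝ) (f : V3 → α) : Prop :=
  ∀ (x : V3) (k : Fin 3 → ℤ), f (fun i => x i + L * (k i : ℝ)) = f x

/-- Partial derivative ∂ᵢ of a function on ℝ³. -/
def pderiv3 {E : Type*} [NormedAddCommGroup E] [NormedSpace ℝ E]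
    (i : Fin 3) (f : V3 → E) (x : V3) : E :=
  fderiv ℝ f x (Pi.single i 1)

/-- Gradient of a scalar function on ℝ³. -/
def grad3 (f : V3 → ℝ) (x : V3) : V3 := fun i => pderiv3 i f x

/-- Divergence of a vector field on ℝ³. -/
def div3 (w : V3 → V3) (x : V3) : ℝ := ∑ i, pderiv3 i (fun y => w y i) x

/-- Laplacian of a scalar function on ℝ³. -/
def lap3 (f : V3 → ℝ) (x : V3) : ℝ := ∑ i, pderiv3 i (fun y => pderiv3 i f y) x

/-- Curl of a vector field on ℝ³. -/
def curl3 (w : V3 → V3) (x : V3) : V3 :=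
  ![pderiv3 1 (fun y => w y 2) x - pderiv3 2 (fun y => w y 1) x,
    pderiv3 2 (fun y => w y 0) x - pderiv3 0 (fun y => w y 2) x,
    pderiv3 0 (fun y => w y 1) x - pderiv3 1 (fun y => w y 0) x]

/-- Cross product on ℝ³. -/
def cross3 (a b : V3) : V3 :=
  ![a 1 * b 2 - a 2 * b 1, a 2 * b 0 - a 0 * b 2, a 0 * b 1 - a 1 * b 0]

/-- Jacobian matrix ∇Φ of a map Φ : ℝ³ → ℝ³. -/
def jac3 (Φ : V3 → V3) (x : V3) : M3 := fun i j => pderiv3 j (fun y => Φ y i) x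

/-- A (jointly) smooth time-dependent field on ℝ × ℝ³. -/
def SmoothTD {E : Type*} [NormedAddCommGroup E] [NormedSpace ℝ E] (φ : ℝ → V3 → E) : Prop :=
  ContDiff ℝ (⊤ : ℕ∞) (fun q : ℝ × V3 => φ q.1 q.2)

/-- `φ` is compactly supported in time inside the time set `S`. -/
def CptSuppIn {α : Type*} [Zero α] (S : Set ℝ) (φ : ℝ → V3 → α) : Prop :=
  ∃ K : Set ℝ, IsCompact K ∧ K ⊆ S ∧ ∀ t ∉ K, ∀ x, φ t x = 0

/-- `t ↦ v(·,t)` is continuous on the time set `I` with values in L²(𝕋³). -/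
def ContL2On (I : Set ℝ) (v : ℝ → V3 → V3) : Prop :=
  ∀ t₀ ∈ I, ∀ ε > (0:ℝ), ∃ δ > (0:ℝ), ∀ t ∈ I, |t - t₀| < δ →
    (∫ x in T3, dot3 (v t x - v t₀ x) (v t x - v t₀ x)) < ε

/-- Weak solution of the incompressible Euler equations on 𝕋³ × I, belonging to C⁰(I; L²(𝕋³)):
each `v(·,t)` is periodic, square-integrable, zero-mean and weakly divergence free, and the
weak formulation holds against all smooth divergence-free test fields compactly supported in
the interior of `I`. -/
def IsEulerWeak (I : Set ℝ) (v : ℝ → V3 → V3) : Prop :=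
  (∀ t ∈ I, Periodic3 (v t)) ∧
  (∀ t ∈ I, MemLp (v t) 2 μ3) ∧
  ContL2On I v ∧
  (∀ t ∈ I, ∀ i, (∫ x in T3, v t x i) = 0) ∧
  (∀ t ∈ I, ∀ ψ : V3 → ℝ, ContDiff ℝ (⊤ : ℕ∞) ψ → Periodic3 ψ →
    (∫ x in T3, dot3 (v t x) (grad3 ψ x)) = 0) ∧
  (∀ φ : ℝ → V3 → V3, SmoothTD φ → (∀ t, Periodic3 (φ t)) →
    (∀ t x, div3 (φ t) x = 0) → CptSuppIn (interior I) φ →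
    (∫ t in I, ∫ x in T3,
      dot3 (v t x)
        (fun j => deriv (fun s => φ s x j) t
          + ∑ i, v t x i * pderiv3 i (fun y => φ t y j) x)) = 0)

/-- Weak solution of the incompressible Navier–Stokes equations with viscosity ν on 𝕋³ × I,
belonging to C⁰(I; L²(𝕋³)). -/
def IsNSWeak (ν : ℝ) (I : Set ℝ) (v : ℝ → V3 → V3) : Prop :=
  (∀ t ∈ I, Periodic3 (v t)) ∧
  (∀ t ∈ I, MemLp (v t) 2 μ3) ∧
  ContL2On I v ∧
  (∀ t ∈ I, ∀ i, (∫ x in T3, v t x i) = 0) ∧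
  (∀ t ∈ I, ∀ ψ : V3 → ℝ, ContDiff ℝ (⊤ : ℕ∞) ψ → Periodic3 ψ →
    (∫ x in T3, dot3 (v t x) (grad3 ψ x)) = 0) ∧
  (∀ φ : ℝ → V3 → V3, SmoothTD φ → (∀ t, Periodic3 (φ t)) →
    (∀ t x, div3 (φ t) x = 0) → CptSuppIn (interior I) φ →
    (∫ t in I, ∫ x in T3,
      dot3 (v t x)
        (fun j => deriv (fun s => φ s x j) t
          + (∑ i, v t x i * pderiv3 i (fun y => φ t y j) x)
          + ν * lap3 (fun y => φ t y j) x)) = 0)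

/-- k-th Fourier coefficient f̂(k) = (2π)⁻³ ∫_{𝕋³} f(x) e^{-i k·x} dx. -/
def fCoef (f : V3 → ℝ) (k : Fin 3 → ℤ) : ℂ :=
  ((2 * π) ^ 3)⁻¹ •
    ∫ x in T3, (f x : ℂ) * Complex.exp (-(Complex.I * (dot3 (fun i => (k i : ℝ)) x : ℂ)))

/-- Euclidean norm of a lattice point k ∈ ℤ³. -/
def zNorm (k : Fin 3 → ℤ) : ℝ := Real.sqrt (∑ i, ((k i : ℝ)) ^ 2)

/-- The summand |k|^{2β} |ŵ(k)|² in the (homogeneous) H^β norm of a vector field. -/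
def hsTerm (β : ℝ) (w : V3 → V3) (k : Fin 3 → ℤ) : ℝ :=
  zNorm k ^ (2 * β) * ∑ j, ‖fCoef (fun x => w x j) k‖ ^ 2

/-- Membership in the Sobolev space H^β(𝕋³): Σ_k |k|^{2β} |ŵ(k)|² < ∞. -/
def MemHs (β : ℝ) (w : V3 → V3) : Prop := Summable (hsTerm β w)

/-- The squared (homogeneous) H^β norm Σ_k |k|^{2β} |ŵ(k)|². -/
def hsSq (β : ℝ) (w : V3 → V3) : ℝ := ∑' k, hsTerm β w k

/-- `t ↦ v(·,t)` belongs to C⁰(I; H^β(𝕋³)). -/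
def ContHsOn (β : ℝ) (I : Set ℝ) (v : ℝ → V3 → V3) : Prop :=
  (∀ t ∈ I, MemHs β (v t)) ∧
  ∀ t₀ ∈ I, ∀ ε > (0:ℝ), ∃ δ > (0:ℝ), ∀ t ∈ I, |t - t₀| < δ →
    hsSq β (fun x => v t x - v t₀ x) < ε

/-- `g` is the distributional (weak) i-th partial derivative of `f` on the torus. -/
def IsWeakDeriv3 (i : Fin 3) (f g : V3 → ℝ) : Prop :=
  ∀ ψ : V3 → ℝ, ContDiff ℝ (⊤ : ℕ∞) ψ → Periodic3 ψ →
    (∫ x in T3, f x * pderiv3 i ψ x) = - ∫ x in T3, g x * ψ x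

/-- `t ↦ v(·,t)` belongs to C⁰(I; W^{1,p}(𝕋³)): at each time v and its distributional
gradient G lie in L^p, and both depend continuously on time in L^p. -/
def ContW1pOn (p : ℝ) (I : Set ℝ) (v : ℝ → V3 → V3) : Prop :=
  ∃ G : ℝ → V3 → Fin 3 → Fin 3 → ℝ,
    (∀ t ∈ I, MemLp (v t) (ENNReal.ofReal p) μ3 ∧
      MemLp (G t) (ENNReal.ofReal p) μ3 ∧
      ∀ j i, IsWeakDeriv3 i (fun x => v t x j) (fun x => G t x j i)) ∧
    (∀ t₀ ∈ I, ∀ ε > (0:ℝ), ∃ δ > (0:ℝ), ∀ t ∈ I, |t - t₀| < δ →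
      eLpNorm (fun x => v t x - v t₀ x) (ENNReal.ofReal p) μ3 < ENNReal.ofReal ε ∧
      eLpNorm (fun x => G t x - G t₀ x) (ENNReal.ofReal p) μ3 < ENNReal.ofReal ε)

/-- `v` belongs to the space-time Hölder space C^β(𝕋³ × I): bounded, with finite Hölder
seminorm in (x,t). -/
def HolderST (β : ℝ) (I : Set ℝ) (v : ℝ → V3 → V3) : Prop :=
  (∃ C : ℝ, ∀ t ∈ I, ∀ x, enorm3 (v t x) ≤ C) ∧
  (∃ C : ℝ, ∀ t ∈ I, ∀ s ∈ I, ∀ x y : V3,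
    enorm3 (v t x - v s y) ≤ C * (enorm3 (x - y) + |t - s|) ^ β)

/-- Smooth solution (v, p, R̊) of the Euler–Reynolds system on 𝕋³ × [0,T]:
∂ₜ v + div(v ⊗ v) + ∇p = div R̊, v divergence-free and zero-mean, p zero-mean,
R̊ symmetric and trace-free. -/
def IsERSol (T : ℝ) (v : ℝ → V3 → V3) (p : ℝ → V3 → ℝ) (R : ℝ → V3 → M3) : Prop :=
  SmoothTD v ∧ SmoothTD p ∧ SmoothTD R ∧
  (∀ t, Periodic3 (v t)) ∧ (∀ t, Periodic3 (p t)) ∧ (∀ t, Periodic3 (R t)) ∧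
  (∀ t ∈ Set.Icc (0:ℝ) T, ∀ x, div3 (v t) x = 0) ∧
  (∀ t ∈ Set.Icc (0:ℝ) T, ∀ i, (∫ x in T3, v t x i) = 0) ∧
  (∀ t ∈ Set.Icc (0:ℝ) T, (∫ x in T3, p t x) = 0) ∧
  (∀ t x i j, R t x i j = R t x j i) ∧
  (∀ t x, (∑ i, R t x i i) = 0) ∧
  (∀ t ∈ Set.Icc (0:ℝ) T, ∀ x, ∀ i,
    deriv (fun s => v s x i) t
      + (∑ j, pderiv3 j (fun y => v t y i * v t y j) x)
      + pderiv3 i (p t) x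
      = ∑ j, pderiv3 j (fun y => R t y i j) x)

/-- Smooth solution (v, p, R̊) of the Navier–Stokes–Reynolds system with viscosity ν on
𝕋³ × [0,T]: ∂ₜ v + div(v ⊗ v) + ∇p − νΔv = div R̊. -/
def IsNSRSol (ν T : ℝ) (v : ℝ → V3 → V3) (p : ℝ → V3 → ℝ) (R : ℝ → V3 → M3) : Prop :=
  SmoothTD v ∧ SmoothTD p ∧ SmoothTD R ∧
  (∀ t, Periodic3 (v t)) ∧ (∀ t, Periodic3 (p t)) ∧ (∀ t, Periodic3 (R t)) ∧
  (∀ t ∈ Set.Icc (0:ℝ) T, ∀ x, div3 (v t) x = 0) ∧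
  (∀ t ∈ Set.Icc (0:ℝ) T, ∀ i, (∫ x in T3, v t x i) = 0) ∧
  (∀ t ∈ Set.Icc (0:ℝ) T, (∫ x in T3, p t x) = 0) ∧
  (∀ t x i j, R t x i j = R t x j i) ∧
  (∀ t x, (∑ i, R t x i i) = 0) ∧
  (∀ t ∈ Set.Icc (0:ℝ) T, ∀ x, ∀ i,
    deriv (fun s => v s x i) t
      + (∑ j, pderiv3 j (fun y => v t y i * v t y j) x)
      + pderiv3 i (p t) x
      - ν * lap3 (fun y => v t y i) x
      = ∑ j, pderiv3 j (fun y => R t y i j) x)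

/-- ‖v‖_{C⁰(𝕋³×[0,T])} ≤ B. -/
def C0BoundV (T : ℝ) (v : ℝ → V3 → V3) (B : ℝ) : Prop :=
  ∀ t ∈ Set.Icc (0:ℝ) T, ∀ x, enorm3 (v t x) ≤ B

/-- ‖v‖_{C¹_{x,t}(𝕋³×[0,T])} ≤ B: v and all its first-order space and time derivatives
are bounded by B. -/
def C1BoundV (T : ℝ) (v : ℝ → V3 → V3) (B : ℝ) : Prop :=
  ∀ t ∈ Set.Icc (0:ℝ) T, ∀ x,
    enorm3 (v t x) ≤ B ∧
    enorm3 (fun i => deriv (fun s => v s x i) t) ≤ B ∧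
    ∀ j, enorm3 (fun i => pderiv3 j (fun y => v t y i) x) ≤ B

/-- ‖R̊‖_{C⁰(𝕋³×[0,T])} ≤ B for a matrix field. -/
def C0BoundM (T : ℝ) (R : ℝ → V3 → M3) (B : ℝ) : Prop :=
  ∀ t ∈ Set.Icc (0:ℝ) T, ∀ x, frobM (R t x) ≤ B

/-- sup_{t∈[0,T]} ‖v(·,t)‖_{L²(𝕋³)} ≤ B. -/
def L2Bound (T : ℝ) (v : ℝ → V3 → V3) (B : ℝ) : Prop :=
  ∀ t ∈ Set.Icc (0:ℝ) T, Real.sqrt (∫ x in T3, dot3 (v t x) (v t x)) ≤ B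

/-- sup_{t∈[0,T]} ‖R̊(·,t)‖_{L¹(𝕋³)} ≤ B for a matrix field. -/
def L1BoundM (T : ℝ) (R : ℝ → V3 → M3) (B : ℝ) : Prop :=
  ∀ t ∈ Set.Icc (0:ℝ) T, (∫ x in T3, frobM (R t x)) ≤ B

/-- The closed ball of radius ρ around the identity in the space of symmetric 3×3
matrices (operator norm). -/
def symBallOp (ρ : ℝ) : Set M3 :=
  {R | (∀ i j, R i j = R j i) ∧ opNorm3 (fun i j => R i j - Id3 i j) ≤ ρ}

/-- ξ is a unit vector with rational coordinates, i.e. ξ ∈ S² ∩ ℚ³. -/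
def IsRatUnit (ξ : V3) : Prop :=
  (∑ i, (ξ i) ^ 2 = 1) ∧ ∀ i, ∃ r : ℚ, ξ i = (r : ℝ)

/-- Sup norm of a function on ℝ³ (C⁰ norm for torus functions). -/
def supNormG {E : Type*} [NormedAddCommGroup E] (f : V3 → E) : ℝ := ⨆ x, ‖f x‖

/-- Hölder seminorm of exponent α of a function on ℝ³. -/
def holderSemiG (α : ℝ) {E : Type*} [NormedAddCommGroup E] (f : V3 → E) : ℝ :=
  ⨆ q : {q : V3 × V3 // q.1 ≠ q.2}, ‖f q.1.1 - f q.1.2‖ / enorm3 (q.1.1 - q.1.2) ^ α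

/-- Hölder norm ‖f‖_{C^{m,α}}: sup norms of derivatives up to order m plus the Hölder
seminorm of the order-m derivatives. -/
def CmAlphaNorm (m : ℕ) (α : ℝ) {E : Type*} [NormedAddCommGroup E] [NormedSpace ℝ E]
    (f : V3 → E) : ℝ :=
  (∑ k ∈ Finset.range (m + 1), supNormG (fun x => iteratedFDeriv ℝ k f x))
    + holderSemiG α (fun x => iteratedFDeriv ℝ m f x)

/-- Hölder norm ‖f‖_{C^θ} = sup|f| + Hölder seminorm, θ ∈ (0,1]. -/
def CthNorm (θ : ℝ) (f : V3 → ℝ) : ℝ := supNormG f + holderSemiG θ f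

open Classical in
/-- Hölder norm ‖f‖_{C^r} for real r = m + σ, m = ⌊r⌋, σ = r - m ∈ [0,1); the Hölder
seminorm term is omitted when σ = 0. -/
def CrNorm (r : ℝ) (f : V3 → ℝ) : ℝ :=
  (∑ k ∈ Finset.range (⌊r⌋₊ + 1), supNormG (fun x => iteratedFDeriv ℝ k f x))
    + (if (⌊r⌋₊ : ℝ) = r then 0
        else holderSemiG (r - ⌊r⌋₊) (fun x => iteratedFDeriv ℝ ⌊r⌋₊ f x))

/-- Mollification of `f` at length scale `l` with kernel `ψ`:
(f ∗ ψ_l)(x) = ∫ f(x−y) l⁻³ ψ(y/l) dy. -/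
def mollify (l : ℝ) (ψ f : V3 → ℝ) (x : V3) : ℝ :=
  ∫ y : V3, f (x - y) * ((l ^ 3)⁻¹ * ψ (l⁻¹ • y))


/-!
Each family consists of three orthogonal pairs of rational unit vectors, one pair in each
coordinate plane (built from the Pythagorean triple 3² + 4² = 5²), together with their
negatives; the second family is the first with the first two coordinates swapped. For the six
directions ξ of a family up to sign, the matrices Id - ξ ⊗ ξ form a basis of the symmetric
matrices, so every symmetric R equals `∑ c_ξ(R) (Id - ξ ⊗ ξ)` with coefficients c_ξ linear in R;
summing over ±ξ accounts for the factor 1/2. At R = Id all coefficients equal 1/4, so they stay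
positive near Id and γ_ξ = √c_ξ is smooth there.
-/

lemma enorm3_eq_norm_toLp (y : V3) : enorm3 y = ‖WithLp.toLp 2 y‖ := by
  simp [enorm3, EuclideanSpace.norm_eq]

lemma bddAbove_opNorm3 (E : M3) :
    BddAbove (Set.range fun y : {y : V3 // enorm3 y = 1} =>
      enorm3 (fun i => ∑ j, E i j * y.1 j)) := by
  set A := Matrix.toEuclideanCLM (n := Fin 3) (𝕜 := ℝ) (Matrix.of E)
  refine ⟨‖A‖, ?_⟩
  rintro _ ⟨⟨y, hy⟩, rfl⟩
  calc enorm3 (fun i => ∑ j, E i j * y j) = ‖A (WithLp.toLp 2 y)‖ := enorm3_eq_norm_toLp _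
    _ ≤ ‖A‖ * ‖WithLp.toLp 2 y‖ := A.le_opNorm _
    _ = ‖A‖ := by rw [← enorm3_eq_norm_toLp, hy, mul_one]

lemma abs_apply_le_opNorm3 (E : M3) (i j : Fin 3) : |E i j| ≤ opNorm3 E := by
  have hcol : enorm3 (Pi.single j 1) = 1 := by
    simp [enorm3_eq_norm_toLp]
  refine le_trans ?_ (le_ciSup (bddAbove_opNorm3 E) ⟨Pi.single j 1, hcol⟩)
  simpa [enorm3_eq_norm_toLp, Pi.single_apply] using
    PiLp.norm_apply_le (WithLp.toLp 2 fun i => E i j) i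

lemma abs_sub_Id3_le_of_mem_symBallOp {ρ : ℝ} {R : M3} (hR : R ∈ symBallOp ρ) (i j : Fin 3) :
    |R i j - Id3 i j| ≤ ρ :=
  (abs_apply_le_opNorm3 _ i j).trans hR.2

-- Directions are stored as 5ξ ∈ ℤ³, so that disjointness, symmetry and |ξ| = 1 are decidable.
def dirZ : Fin 2 → Fin 6 → Fin 3 → ℤ :=
  ![![![3, 4, 0], ![0, 3, 4], ![4, 0, 3], ![4, -3, 0], ![0, 4, -3], ![-3, 0, 4]],
    ![![4, 3, 0], ![0, 4, 3], ![3, 0, 4], ![3, -4, 0], ![0, 3, -4], ![-4, 0, 3]]]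

def dirSetZ (α : Fin 2) : Finset (Fin 3 → ℤ) :=
  Finset.univ.image (dirZ α) ∪ Finset.univ.image (-dirZ α)

lemma dirZ_injective : ∀ α, Function.Injective (dirZ α) := by
  decide

lemma disjoint_image_dirZ_neg :
    ∀ α, Disjoint (Finset.univ.image (dirZ α)) (Finset.univ.image (-dirZ α)) := by
  decide

lemma disjoint_dirSetZ : Disjoint (dirSetZ 0) (dirSetZ 1) := by
  decide

lemma neg_mem_dirSetZ : ∀ α, ∀ q ∈ dirSetZ α, -q ∈ dirSetZ α := by
  decide

lemma sum_sq_of_mem_dirSetZ : ∀ α, ∀ q ∈ dirSetZ α, ∑ i, q i ^ 2 = 25 := by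
  decide

def ofScaledInt (q : Fin 3 → ℤ) : V3 := fun i => (q i : ℝ) / 5

lemma ofScaledInt_injective : Function.Injective ofScaledInt := fun p q h =>
  funext fun i => by simpa [ofScaledInt] using congrFun h i

lemma ofScaledInt_neg (q : Fin 3 → ℤ) : ofScaledInt (-q) = -ofScaledInt q := by
  ext i
  simp [ofScaledInt, neg_div]

lemma isRatUnit_ofScaledInt {q : Fin 3 → ℤ} (hq : ∑ i, q i ^ 2 = 25) :
    IsRatUnit (ofScaledInt q) := by
  refine ⟨?_, fun i => ⟨q i / 5, by simp [ofScaledInt]⟩⟩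
  have hq' : ∑ i, (q i : ℝ) ^ 2 = 25 := by exact_mod_cast hq
  simp only [ofScaledInt, div_pow, ← Finset.sum_div, hq']
  norm_num

def dirSet (α : Fin 2) : Finset V3 := (dirSetZ α).image ofScaledInt

lemma disjoint_dirSet : Disjoint (dirSet 0) (dirSet 1) :=
  (Finset.disjoint_image ofScaledInt_injective).2 disjoint_dirSetZ

lemma isRatUnit_of_mem_dirSet {α : Fin 2} {ξ : V3} (hξ : ξ ∈ dirSet α) : IsRatUnit ξ := by
  obtain ⟨q, hq, rfl⟩ := Finset.mem_image.1 hξ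
  exact isRatUnit_ofScaledInt (sum_sq_of_mem_dirSetZ α q hq)

lemma neg_mem_dirSet {α : Fin 2} {ξ : V3} (hξ : ξ ∈ dirSet α) : -ξ ∈ dirSet α := by
  obtain ⟨q, hq, rfl⟩ := Finset.mem_image.1 hξ
  exact Finset.mem_image.2 ⟨-q, neg_mem_dirSetZ α q hq, ofScaledInt_neg q⟩

lemma mem_dirSet {α : Fin 2} {ξ : V3} :
    ξ ∈ dirSet α ↔ ∃ k, ξ = ofScaledInt (dirZ α k) ∨ ξ = -ofScaledInt (dirZ α k) := by
  simp only [dirSet, dirSetZ, Finset.mem_image, Finset.mem_union, Finset.mem_univ, true_and]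
  constructor
  · rintro ⟨q, ⟨k, rfl⟩ | ⟨k, rfl⟩, rfl⟩
    exacts [⟨k, .inl rfl⟩, ⟨k, .inr (ofScaledInt_neg _)⟩]
  · rintro ⟨k, rfl | rfl⟩
    exacts [⟨_, .inl ⟨k, rfl⟩, rfl⟩, ⟨_, .inr ⟨k, rfl⟩, ofScaledInt_neg _⟩]

lemma sum_dirSet_of_even (α : Fin 2) {f : V3 → ℝ} (hf : ∀ ξ, f (-ξ) = f ξ) :
    ∑ ξ ∈ dirSet α, f ξ = 2 * ∑ k, f (ofScaledInt (dirZ α k)) := by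
  rw [dirSet, Finset.sum_image fun p _ q _ h => ofScaledInt_injective h, dirSetZ,
    Finset.sum_union (disjoint_image_dirZ_neg α),
    Finset.sum_image fun k _ l _ h => dirZ_injective α h,
    Finset.sum_image (f := fun q => f (ofScaledInt q)) (g := -dirZ α)
      fun k _ l _ h => dirZ_injective α (neg_injective h)]
  simp only [Pi.neg_apply, ofScaledInt_neg, hf, two_mul]

-- The quadratic form whose values at the directions of a family are the coefficients c_ξ(R)
-- (it is unique, since the ξ ⊗ ξ form a basis); `s = ±1` distinguishes the two families.
def gammaSqForm (s : ℝ) (R : M3) : M3 :=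
  let r01 := (R 0 1 + R 1 0) / 2
  let r02 := (R 0 2 + R 2 0) / 2
  let r12 := (R 1 2 + R 2 1) / 2
  !![-(5/4) * R 0 0 + 3/4 * R 1 1 + 3/4 * R 2 2 + s * (7/12) * (r02 - r01),
      s * (7/24) * (R 1 1 - R 0 0) - 241/192 * r01 + 49/576 * (r02 + r12),
      s * (7/24) * (R 0 0 - R 2 2) - 241/192 * r02 + 49/576 * (r01 + r12);
    s * (7/24) * (R 1 1 - R 0 0) - 241/192 * r01 + 49/576 * (r02 + r12),
      3/4 * R 0 0 - 5/4 * R 1 1 + 3/4 * R 2 2 + s * (7/12) * (r01 - r12),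
      s * (7/24) * (R 2 2 - R 1 1) - 241/192 * r12 + 49/576 * (r01 + r02);
    s * (7/24) * (R 0 0 - R 2 2) - 241/192 * r02 + 49/576 * (r01 + r12),
      s * (7/24) * (R 2 2 - R 1 1) - 241/192 * r12 + 49/576 * (r01 + r02),
      3/4 * R 0 0 + 3/4 * R 1 1 - 5/4 * R 2 2 + s * (7/12) * (r12 - r02)]

def gammaSq (α : Fin 2) (ξ : V3) (R : M3) : ℝ :=
  ∑ i, ∑ j, gammaSqForm (![1, -1] α) R i j * ξ i * ξ j

lemma gammaSq_neg (α : Fin 2) (ξ : V3) (R : M3) : gammaSq α (-ξ) R = gammaSq α ξ R := by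
  simp only [gammaSq, Pi.neg_apply, mul_neg, neg_mul, neg_neg]

lemma contDiff_gammaSq (α : Fin 2) (ξ : V3) : ContDiff ℝ (⊤ : ℕ∞) (gammaSq α ξ) := by
  unfold gammaSq gammaSqForm
  simp only [Matrix.of_apply, Matrix.cons_val', Matrix.cons_val_fin_one, Fin.sum_univ_three,
    Matrix.cons_val_zero, Matrix.cons_val_one, Matrix.cons_val]
  fun_prop

set_option maxHeartbeats 400000 in
lemma sum_gammaSq_mul (α : Fin 2) (R : M3) (i j : Fin 3) :
    ∑ k, gammaSq α (ofScaledInt (dirZ α k)) R *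
        (Id3 i j - ofScaledInt (dirZ α k) i * ofScaledInt (dirZ α k) j) =
      (R i j + R j i) / 2 := by
  fin_cases α <;> fin_cases i <;> fin_cases j <;>
    · simp [gammaSq, gammaSqForm, dirZ, ofScaledInt, Id3, Fin.sum_univ_succ]
      ring

-- γ² is linear in R, equals 1/4 at Id and has coefficients of total absolute value 23/8.
lemma one_div_eight_le_gammaSq_dirZ (α : Fin 2) (k : Fin 6) {R : M3}
    (hR : R ∈ symBallOp (1/23)) : 1/8 ≤ gammaSq α (ofScaledInt (dirZ α k)) R := by
  have h i j := abs_le.1 (abs_sub_Id3_le_of_mem_symBallOp hR i j)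
  have h00 := h 0 0
  have h11 := h 1 1
  have h22 := h 2 2
  have h01 := h 0 1
  have h02 := h 0 2
  have h12 := h 1 2
  have h10 := h 1 0
  have h20 := h 2 0
  have h21 := h 2 1
  simp only [Id3, Fin.reduceEq, if_true, if_false, sub_zero] at h00 h11 h22 h01 h02 h12 h10 h20 h21
  fin_cases α <;> fin_cases k <;>
    · simp [gammaSq, gammaSqForm, dirZ, ofScaledInt, Fin.sum_univ_succ]
      linarith

lemma one_div_eight_le_gammaSq {α : Fin 2} {ξ : V3} (hξ : ξ ∈ dirSet α) {R : M3}
    (hR : R ∈ symBallOp (1/23)) : 1/8 ≤ gammaSq α ξ R := by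
  obtain ⟨k, rfl | rfl⟩ := mem_dirSet.1 hξ
  · exact one_div_eight_le_gammaSq_dirZ α k hR
  · rw [gammaSq_neg]
    exact one_div_eight_le_gammaSq_dirZ α k hR

lemma half_sum_dirSet_gammaSq_mul (α : Fin 2) {R : M3} (hR : ∀ i j, R i j = R j i)
    (i j : Fin 3) :
    (1/2) * ∑ ξ ∈ dirSet α, gammaSq α ξ R * (Id3 i j - ξ i * ξ j) = R i j := by
  rw [sum_dirSet_of_even α fun ξ => by simp only [gammaSq_neg, Pi.neg_apply, neg_mul_neg],
    sum_gammaSq_mul, hR j i]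
  ring

/-- Geometric lemma, Proposition 5.5 / Lemma 3.2 of [DLSZ13].
There exist c_* > 0, disjoint finite sets Λ₀, Λ₁ ⊂ S² ∩ ℚ³ and smooth positive
functions γ_ξ^{(α)} on B̄_{c_*}(Id) with γ_{−ξ} = γ_ξ, such that every symmetric R in
B̄_{c_*}(Id) decomposes as R = ½ Σ_{ξ∈Λ_α} γ_ξ^{(α)}(R)² (Id − ξ ⊗ ξ). -/
theorem stmt_10 :
    ∃ cstar > (0:ℝ), ∃ Λ : Fin 2 → Finset V3, ∃ γ : Fin 2 → V3 → M3 → ℝ,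
      Disjoint (Λ 0) (Λ 1) ∧
      (∀ α : Fin 2, ∀ ξ ∈ Λ α, IsRatUnit ξ) ∧
      (∀ α : Fin 2, ∀ ξ ∈ Λ α, -ξ ∈ Λ α ∧ γ α (-ξ) = γ α ξ) ∧
      (∀ α : Fin 2, ∀ ξ ∈ Λ α, ContDiffOn ℝ (⊤ : ℕ∞) (γ α ξ) (symBallOp cstar) ∧
        ∀ R ∈ symBallOp cstar, 0 < γ α ξ R) ∧
      (∀ α : Fin 2, ∀ R ∈ symBallOp cstar, ∀ i j,
        R i j = (1/2) * ∑ ξ ∈ Λ α, (γ α ξ R) ^ 2 * (Id3 i j - ξ i * ξ j)) := by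
  have hpos {α ξ} (hξ : ξ ∈ dirSet α) {R} (hR : R ∈ symBallOp (1/23)) : 0 < gammaSq α ξ R :=
    lt_of_lt_of_le (by norm_num) (one_div_eight_le_gammaSq hξ hR)
  refine ⟨1/23, by norm_num, dirSet, fun α ξ R => √(gammaSq α ξ R), disjoint_dirSet,
    fun α ξ => isRatUnit_of_mem_dirSet,
    fun α ξ hξ => ⟨neg_mem_dirSet hξ, by simp only [gammaSq_neg]⟩,
    fun α ξ hξ => ⟨fun R hR => ?_, fun R hR => Real.sqrt_pos.2 (hpos hξ hR)⟩, fun α R hR i j => ?_⟩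
  · exact ((contDiff_gammaSq α ξ).contDiffAt.sqrt (hpos hξ hR).ne').contDiffWithinAt
  · rw [Finset.sum_congr rfl fun ξ hξ => by rw [Real.sq_sqrt (hpos hξ hR).le],
      half_sum_dirSet_gammaSq_mul α hR.1]

end
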